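/- arXiv:0810.2157 — 2 statements merged into one kernel-verified Lean document; each statement's English description precedes it below -/
import Mathlib

section
/- Let ν be a positively homogeneous function of degree κ > 0 on ℝ^d, strictly positive outside 0 and continuous. Define ν(A) = sup_{x≠0} ν(Ax)/ν(x) and νₙ(𝒜) = max over n-fold products P of matrices from 𝒜 of ν(P). Then ρ(𝒜) = limsup_{n→∞} (νₙ(𝒜))^{1/(κn)}. -/
/-!
Compactness of the unit sphere and homogeneity give `m ‖x‖ ^ κ ≤ ν x ≤ M ‖x‖ ^ κ` for some
`m, M > 0`. Hence `ν(A)` and `‖A‖ ^ κ` (operator norm for the sup norm) agree up to the factor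
`M / m` in both directions, and so do `νₙ(𝒜)` and `‖𝒜ⁿ‖ ^ κ`. After taking `1 / (κ n)`-th powers
the two sequences of the theorem differ by at most the factor `(M / m) ^ (1 / (κ n)) → 1`, and the
first one is bounded, so their limsups coincide.
-/

open Filter Set

/-- The set of all products of exactly `n` matrices from `𝒜`. -/
def prods {d : ℕ} (𝒜 : Set (Matrix (Fin d) (Fin d) ℝ)) (n : ℕ) :
    Set (Matrix (Fin d) (Fin d) ℝ) :=
  {P | ∃ l : List (Matrix (Fin d) (Fin d) ℝ), l.length = n ∧ (∀ A ∈ l, A ∈ 𝒜) ∧ l.prod = P}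

/-- `‖𝒜ⁿ‖`: the supremum of the norm `N` over all `n`-fold products from `𝒜`. -/
noncomputable def supN {d : ℕ} (N : Matrix (Fin d) (Fin d) ℝ → ℝ)
    (𝒜 : Set (Matrix (Fin d) (Fin d) ℝ)) (n : ℕ) : ℝ :=
  sSup (N '' prods 𝒜 n)

/-- The joint spectral radius of `𝒜` with respect to the matrix norm `N`,
given by the generalized Gelfand formula. -/
noncomputable def jsr {d : ℕ} (N : Matrix (Fin d) (Fin d) ℝ → ℝ)
    (𝒜 : Set (Matrix (Fin d) (Fin d) ℝ)) : ℝ :=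
  Filter.limsup (fun n : ℕ => (supN N 𝒜 n) ^ ((n : ℝ)⁻¹)) Filter.atTop

/-- A (matrix) norm: nonnegative, definite, absolutely homogeneous, subadditive. -/
def IsMatNorm {d : ℕ} (N : Matrix (Fin d) (Fin d) ℝ → ℝ) : Prop :=
  (∀ A, 0 ≤ N A) ∧ (∀ A, N A = 0 ↔ A = 0) ∧
  (∀ (c : ℝ) A, N (c • A) = |c| * N A) ∧ (∀ A B, N (A + B) ≤ N A + N B)

/-- The canonical operator norm of a matrix (induced by the sup norm on `ℝ^d`). -/
noncomputable def opNormC {d : ℕ} (A : Matrix (Fin d) (Fin d) ℝ) : ℝ :=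
  ‖LinearMap.toContinuousLinearMap (Matrix.mulVecLin A)‖

/-- `ν(A) = sup_{x ≠ 0} ν(Ax)/ν(x)` for a positive homogeneous function `ν`. -/
noncomputable def nuMat {d : ℕ} (ν : (Fin d → ℝ) → ℝ)
    (A : Matrix (Fin d) (Fin d) ℝ) : ℝ :=
  sSup ((fun x => ν (A.mulVec x) / ν x) '' {x | x ≠ 0})

/-- `νₙ(𝒜)`: the maximum of `ν(P)` over all `n`-fold products `P` from `𝒜`. -/
noncomputable def nuProd {d : ℕ} (ν : (Fin d → ℝ) → ℝ)
    (𝒜 : Set (Matrix (Fin d) (Fin d) ℝ)) (n : ℕ) : ℝ :=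
  sSup ((nuMat ν) '' prods 𝒜 n)

open scoped Topology Matrix Matrix.Norms.Operator

section Limsup

variable {ι : Type*} {l : Filter ι} [l.NeBot] {u v c : ι → ℝ}

theorem limsup_le_limsup_of_le_mul (hc : Tendsto c l (𝓝 1)) (hu₀ : 0 ≤ᶠ[l] u)
    (hu : IsBoundedUnder (· ≤ ·) l u) (hv₀ : 0 ≤ᶠ[l] v) (hvu : v ≤ᶠ[l] c * u) :
    limsup v l ≤ limsup u l := by
  have hc₀ : ∃ᶠ i in l, 0 ≤ c i :=
    (hc.eventually (eventually_ge_nhds zero_lt_one)).frequently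
  calc limsup v l
      ≤ limsup (c * u) l :=
        limsup_le_limsup hvu (isCoboundedUnder_le_of_eventually_le l hv₀)
          (isBoundedUnder_le_mul_of_nonneg hc₀ hc.isBoundedUnder_le hu₀ hu)
    _ ≤ limsup c l * limsup u l := limsup_mul_le hc₀ hc.isBoundedUnder_le hu₀ hu
    _ = limsup u l := by rw [hc.limsup_eq, one_mul]

theorem limsup_eq_of_le_mul_of_le_mul (hc : Tendsto c l (𝓝 1)) (hu₀ : 0 ≤ u) (hv₀ : 0 ≤ v)
    (hu : IsBoundedUnder (· ≤ ·) l u) (huv : u ≤ c * v) (hvu : v ≤ c * u) :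
    limsup u l = limsup v l := by
  have hc₀ : ∃ᶠ i in l, 0 ≤ c i :=
    (hc.eventually (eventually_ge_nhds zero_lt_one)).frequently
  have hv : IsBoundedUnder (· ≤ ·) l v :=
    (isBoundedUnder_le_mul_of_nonneg hc₀ hc.isBoundedUnder_le (.of_forall hu₀) hu).mono_le
      (.of_forall hvu)
  exact le_antisymm
    (limsup_le_limsup_of_le_mul hc (.of_forall hv₀) hv (.of_forall hu₀) (.of_forall huv))
    (limsup_le_limsup_of_le_mul hc (.of_forall hu₀) hu (.of_forall hv₀) (.of_forall hvu))

end Limsup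

theorem sSup_image_le_of_le_comp {α : Type*} {S : Set α} {f g : α → ℝ} {φ : ℝ → ℝ}
    (hφ : MonotoneOn φ (Ici 0)) (hφ₀ : 0 ≤ φ 0) (hg : BddAbove (g '' S))
    (hg₀ : ∀ x ∈ S, 0 ≤ g x) (hfg : ∀ x ∈ S, f x ≤ φ (g x)) :
    sSup (f '' S) ≤ φ (sSup (g '' S)) := by
  have hsup₀ : 0 ≤ sSup (g '' S) := Real.sSup_nonneg (by simpa using hg₀)
  refine Real.sSup_le ?_ (hφ₀.trans (hφ self_mem_Ici hsup₀ hsup₀))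
  rintro _ ⟨x, hx, rfl⟩
  exact (hfg x hx).trans (hφ (hg₀ x hx) hsup₀ (le_csSup hg ⟨x, hx, rfl⟩))

theorem norm_list_prod_le_pow_length {R : Type*} [SeminormedRing R] (h₁ : ‖(1 : R)‖ ≤ 1)
    {C : ℝ} (hC : 0 ≤ C) {l : List R} (hl : ∀ a ∈ l, ‖a‖ ≤ C) :
    ‖l.prod‖ ≤ C ^ l.length := by
  induction l with
  | nil => simpa using h₁
  | cons a l ih =>
    rw [List.forall_mem_cons] at hl
    rw [List.prod_cons, List.length_cons, pow_succ']
    exact (norm_mul_le a l.prod).trans (mul_le_mul hl.1 (ih hl.2) (norm_nonneg _) hC)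

section Products

variable {d : ℕ}

theorem prods_finite {𝒜 : Set (Matrix (Fin d) (Fin d) ℝ)} (h𝒜 : 𝒜.Finite) (n : ℕ) :
    (prods 𝒜 n).Finite := by
  have := h𝒜.to_subtype
  refine ((List.finite_length_eq 𝒜 n).image fun l => (l.map Subtype.val).prod).subset ?_
  rintro _ ⟨l, rfl, hl, rfl⟩
  lift l to List 𝒜 using hl
  exact ⟨l, by simp, rfl⟩

theorem opNormC_eq_norm (A : Matrix (Fin d) (Fin d) ℝ) : opNormC A = ‖A‖ := by
  rw [Matrix.linfty_opNorm_eq_opNorm]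
  rfl

theorem opNormC_nonneg (A : Matrix (Fin d) (Fin d) ℝ) : 0 ≤ opNormC A :=
  norm_nonneg _

theorem opNormC_le_of_mulVec_le {A : Matrix (Fin d) (Fin d) ℝ} {C : ℝ} (hC : 0 ≤ C)
    (h : ∀ x, ‖A *ᵥ x‖ ≤ C * ‖x‖) : opNormC A ≤ C :=
  ContinuousLinearMap.opNorm_le_bound _ hC h

theorem supN_opNormC_le_pow {𝒜 : Set (Matrix (Fin d) (Fin d) ℝ)} {C : ℝ} (hC : 0 ≤ C)
    (h𝒜 : ∀ A ∈ 𝒜, opNormC A ≤ C) (n : ℕ) : supN opNormC 𝒜 n ≤ C ^ n := by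
  refine Real.sSup_le ?_ (pow_nonneg hC n)
  rintro _ ⟨_, ⟨l, rfl, hl, rfl⟩, rfl⟩
  have h₁ : ‖(1 : Matrix (Fin d) (Fin d) ℝ)‖ ≤ 1 := by
    rw [← opNormC_eq_norm]
    exact opNormC_le_of_mulVec_le zero_le_one fun x => by simp
  simp only [opNormC_eq_norm] at h𝒜 ⊢
  exact norm_list_prod_le_pow_length h₁ hC fun A hA => h𝒜 A (hl A hA)

theorem supN_opNormC_nonneg {𝒜 : Set (Matrix (Fin d) (Fin d) ℝ)} (n : ℕ) :
    0 ≤ supN opNormC 𝒜 n :=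
  Real.sSup_nonneg <| by
    rintro _ ⟨A, -, rfl⟩
    exact opNormC_nonneg A

theorem isBoundedUnder_supN_opNormC_rpow {𝒜 : Set (Matrix (Fin d) (Fin d) ℝ)}
    (h𝒜 : 𝒜.Finite) :
    IsBoundedUnder (· ≤ ·) atTop fun n : ℕ => supN opNormC 𝒜 n ^ (n : ℝ)⁻¹ := by
  obtain ⟨C, hC⟩ := (h𝒜.image opNormC).bddAbove
  have hC' : ∀ A ∈ 𝒜, opNormC A ≤ max C 0 := fun A hA =>
    (hC ⟨A, hA, rfl⟩).trans (le_max_left C 0)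
  refine isBoundedUnder_of_eventually_le (a := max C 0) ?_
  filter_upwards [eventually_ne_atTop 0] with n hn
  calc supN opNormC 𝒜 n ^ (n : ℝ)⁻¹
      ≤ (max C 0 ^ n) ^ (n : ℝ)⁻¹ :=
        Real.rpow_le_rpow (supN_opNormC_nonneg n)
          (supN_opNormC_le_pow (le_max_right C 0) hC' n) (by positivity)
    _ = max C 0 := Real.pow_rpow_inv_natCast (le_max_right C 0) hn

end Products

theorem exists_rpow_norm_bounds {E : Type*} [NormedAddCommGroup E] [NormedSpace ℝ E]
    [ProperSpace E] {ν : E → ℝ} {κ : ℝ} (hκ : 0 < κ) (hcont : Continuous ν)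
    (hpos : ∀ x, x ≠ 0 → 0 < ν x) (hhom : ∀ t : ℝ, 0 < t → ∀ x, ν (t • x) = t ^ κ * ν x) :
    ∃ m M : ℝ, 0 < m ∧ 0 < M ∧ ∀ x, m * ‖x‖ ^ κ ≤ ν x ∧ ν x ≤ M * ‖x‖ ^ κ := by
  obtain ⟨m, M, hm, hM, hsphere⟩ : ∃ m M : ℝ, 0 < m ∧ 0 < M ∧
      ∀ y ∈ Metric.sphere (0 : E) 1, m ≤ ν y ∧ ν y ≤ M := by
    rcases (Metric.sphere (0 : E) 1).eq_empty_or_nonempty with h | h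
    · exact ⟨1, 1, one_pos, one_pos, by simp [h]⟩
    obtain ⟨u, hu, hmin⟩ := (isCompact_sphere 0 1).exists_isMinOn h hcont.continuousOn
    obtain ⟨w, -, hmax⟩ := (isCompact_sphere 0 1).exists_isMaxOn h hcont.continuousOn
    have hu₀ : 0 < ν u := hpos u (ne_zero_of_mem_unit_sphere ⟨u, hu⟩)
    exact ⟨ν u, ν w, hu₀, hu₀.trans_le (hmax hu), fun y hy => ⟨hmin hy, hmax hy⟩⟩
  refine ⟨m, M, hm, hM, fun x => ?_⟩
  rcases eq_or_ne x 0 with rfl | hx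
  · have hν₀ : ν 0 = 0 := by
      have h₂ := hhom 2 two_pos 0
      rw [smul_zero] at h₂
      have : (1 : ℝ) < 2 ^ κ := Real.one_lt_rpow one_lt_two hκ
      nlinarith
    simp [hν₀, Real.zero_rpow hκ.ne']
  have hnx : 0 < ‖x‖ := norm_pos_iff.mpr hx
  have hx' : ν x = ‖x‖ ^ κ * ν (‖x‖⁻¹ • x) := by
    rw [← hhom _ hnx, smul_smul, mul_inv_cancel₀ hnx.ne', one_smul]
  have hsx := hsphere (‖x‖⁻¹ • x) (by simp [norm_smul, hnx.ne'])
  have hκx : 0 ≤ ‖x‖ ^ κ := by positivity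
  rw [hx', mul_comm m, mul_comm M]
  exact ⟨mul_le_mul_of_nonneg_left hsx.1 hκx, mul_le_mul_of_nonneg_left hsx.2 hκx⟩

theorem nonneg_of_mul_rpow_norm_le {E : Type*} [SeminormedAddCommGroup E] {ν : E → ℝ}
    {κ m : ℝ} (hm : 0 ≤ m) (hν : ∀ x, m * ‖x‖ ^ κ ≤ ν x) (x : E) : 0 ≤ ν x :=
  (mul_nonneg hm (Real.rpow_nonneg (norm_nonneg x) κ)).trans (hν x)

section NuNorm

variable {d : ℕ} {ν : (Fin d → ℝ) → ℝ} {κ m M : ℝ}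

theorem nuMat_nonneg (hν₀ : ∀ x, 0 ≤ ν x) (A : Matrix (Fin d) (Fin d) ℝ) : 0 ≤ nuMat ν A :=
  Real.sSup_nonneg <| by
    rintro _ ⟨x, -, rfl⟩
    exact div_nonneg (hν₀ _) (hν₀ x)

variable (hm : 0 < m) (hν : ∀ x, m * ‖x‖ ^ κ ≤ ν x ∧ ν x ≤ M * ‖x‖ ^ κ)
include hm hν

theorem apply_mulVec_div_le (hκ : 0 ≤ κ) (hM : 0 ≤ M) (A : Matrix (Fin d) (Fin d) ℝ)
    {x : Fin d → ℝ} (hx : x ≠ 0) : ν (A *ᵥ x) / ν x ≤ M / m * opNormC A ^ κ := by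
  have hνx : 0 < ν x := (mul_pos hm (by positivity)).trans_le (hν x).1
  rw [div_le_iff₀ hνx]
  calc ν (A *ᵥ x)
      ≤ M * (opNormC A * ‖x‖) ^ κ := by
        refine (hν _).2.trans (mul_le_mul_of_nonneg_left ?_ hM)
        exact Real.rpow_le_rpow (norm_nonneg _)
          (opNormC_eq_norm A ▸ Matrix.linfty_opNorm_mulVec A x) hκ
    _ = M / m * opNormC A ^ κ * (m * ‖x‖ ^ κ) := by
        rw [Real.mul_rpow (opNormC_nonneg A) (norm_nonneg x)]
        field_simp
    _ ≤ M / m * opNormC A ^ κ * ν x :=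
        mul_le_mul_of_nonneg_left (hν x).1 (by have := opNormC_nonneg A; positivity)

theorem nuMat_le_mul_opNormC_rpow (hκ : 0 ≤ κ) (hM : 0 ≤ M) (A : Matrix (Fin d) (Fin d) ℝ) :
    nuMat ν A ≤ M / m * opNormC A ^ κ := by
  refine Real.sSup_le ?_ (by have := opNormC_nonneg A; positivity)
  rintro _ ⟨x, hx, rfl⟩
  exact apply_mulVec_div_le hm hν hκ hM A hx

theorem opNormC_rpow_le_mul_nuMat (hκ : 0 < κ) (hM : 0 ≤ M) (A : Matrix (Fin d) (Fin d) ℝ) :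
    opNormC A ^ κ ≤ M / m * nuMat ν A := by
  have hν₀ := nonneg_of_mul_rpow_norm_le hm.le fun x => (hν x).1
  have hK : 0 ≤ M / m * nuMat ν A := by have := nuMat_nonneg hν₀ A; positivity
  rw [← Real.le_rpow_inv_iff_of_pos (opNormC_nonneg A) hK hκ]
  refine opNormC_le_of_mulVec_le (by positivity) fun x => ?_
  rcases eq_or_ne x 0 with rfl | hx
  · simp
  have hbdd : BddAbove ((fun x => ν (A *ᵥ x) / ν x) '' {x | x ≠ 0}) :=
    ⟨_, by rintro _ ⟨y, hy, rfl⟩; exact apply_mulVec_div_le hm hν hκ.le hM A hy⟩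
  have hνx : 0 < ν x := (mul_pos hm (by positivity)).trans_le (hν x).1
  have hratio : ν (A *ᵥ x) ≤ nuMat ν A * ν x :=
    (div_le_iff₀ hνx).mp (le_csSup hbdd ⟨x, hx, rfl⟩)
  have hpow : ‖A *ᵥ x‖ ^ κ ≤ M / m * nuMat ν A * ‖x‖ ^ κ := by
    rw [div_mul_eq_mul_div, div_mul_eq_mul_div, le_div_iff₀ hm]
    calc ‖A *ᵥ x‖ ^ κ * m
        ≤ ν (A *ᵥ x) := by rw [mul_comm]; exact (hν _).1
      _ ≤ nuMat ν A * (M * ‖x‖ ^ κ) :=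
        hratio.trans (mul_le_mul_of_nonneg_left (hν x).2 (nuMat_nonneg hν₀ A))
      _ = M * nuMat ν A * ‖x‖ ^ κ := by ring
  calc ‖A *ᵥ x‖
      = (‖A *ᵥ x‖ ^ κ) ^ κ⁻¹ := (Real.rpow_rpow_inv (norm_nonneg _) hκ.ne').symm
    _ ≤ (M / m * nuMat ν A * ‖x‖ ^ κ) ^ κ⁻¹ := by gcongr
    _ = (M / m * nuMat ν A) ^ κ⁻¹ * ‖x‖ := by
        rw [Real.mul_rpow hK (by positivity), Real.rpow_rpow_inv (norm_nonneg x) hκ.ne']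

end NuNorm

section Sequences

variable {d : ℕ} {𝒜 : Set (Matrix (Fin d) (Fin d) ℝ)} {ν : (Fin d → ℝ) → ℝ} {κ m M : ℝ}

theorem nuProd_nonneg (hν₀ : ∀ x, 0 ≤ ν x) (n : ℕ) : 0 ≤ nuProd ν 𝒜 n :=
  Real.sSup_nonneg <| by
    rintro _ ⟨A, -, rfl⟩
    exact nuMat_nonneg hν₀ A

variable (h𝒜 : 𝒜.Finite) (hm : 0 < m) (hM : 0 ≤ M)
  (hν : ∀ x, m * ‖x‖ ^ κ ≤ ν x ∧ ν x ≤ M * ‖x‖ ^ κ)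
include h𝒜 hm hM hν

theorem nuProd_le_mul_supN_rpow (hκ : 0 < κ) (n : ℕ) :
    nuProd ν 𝒜 n ≤ M / m * supN opNormC 𝒜 n ^ κ :=
  sSup_image_le_of_le_comp (φ := fun t => M / m * t ^ κ)
    (fun a ha b _ hab => by dsimp only; gcongr)
    (by simp [Real.zero_rpow hκ.ne']) ((prods_finite h𝒜 n).image _).bddAbove
    (fun A _ => opNormC_nonneg A) (fun A _ => nuMat_le_mul_opNormC_rpow hm hν hκ.le hM A)

theorem supN_rpow_le_mul_nuProd (hκ : 0 < κ) (n : ℕ) :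
    supN opNormC 𝒜 n ^ κ ≤ M / m * nuProd ν 𝒜 n := by
  have hν₀ := nonneg_of_mul_rpow_norm_le hm.le fun x => (hν x).1
  rw [← Real.le_rpow_inv_iff_of_pos (supN_opNormC_nonneg n)
    (by have := nuProd_nonneg (𝒜 := 𝒜) hν₀ n; positivity) hκ]
  refine sSup_image_le_of_le_comp (φ := fun t => (M / m * t) ^ κ⁻¹)
    (fun a ha b _ hab => by dsimp only; gcongr; exact mul_nonneg (by positivity) ha)
    (by simp [Real.zero_rpow (inv_ne_zero hκ.ne')]) ((prods_finite h𝒜 n).image _).bddAbove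
    (fun A _ => nuMat_nonneg hν₀ A) (fun A _ => ?_)
  rw [Real.le_rpow_inv_iff_of_pos (opNormC_nonneg A)
    (by have := nuMat_nonneg hν₀ A; positivity) hκ]
  exact opNormC_rpow_le_mul_nuMat hm hν hκ hM A

end Sequences

theorem statement7_general {d : ℕ} (𝒜 : Finset (Matrix (Fin d) (Fin d) ℝ))
    (ν : (Fin d → ℝ) → ℝ) (κ : ℝ) (hκ : 0 < κ)
    (hcont : Continuous ν) (hpos : ∀ x, x ≠ 0 → 0 < ν x)
    (hhom : ∀ (t : ℝ), 0 < t → ∀ x, ν (t • x) = t ^ κ * ν x) :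
    jsr opNormC (↑𝒜 : Set (Matrix (Fin d) (Fin d) ℝ)) =
      Filter.limsup
        (fun n : ℕ => (nuProd ν (↑𝒜 : Set (Matrix (Fin d) (Fin d) ℝ)) n) ^ ((κ * n)⁻¹))
        Filter.atTop := by
  obtain ⟨m, M, hm, hM, hν⟩ := exists_rpow_norm_bounds hκ hcont hpos hhom
  have hν₀ := nonneg_of_mul_rpow_norm_le hm.le fun x => (hν x).1
  have hK : 0 < M / m := div_pos hM hm
  have hc : Tendsto (fun n : ℕ => (M / m) ^ (κ * n)⁻¹) atTop (𝓝 1) := by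
    have h := (Real.continuousAt_const_rpow hK.ne').tendsto.comp
      (tendsto_natCast_atTop_atTop.const_mul_atTop hκ).inv_tendsto_atTop
    rwa [Real.rpow_zero] at h
  have hexp : ∀ n : ℕ, supN opNormC (𝒜 : Set (Matrix (Fin d) (Fin d) ℝ)) n ^ (n : ℝ)⁻¹ =
      (supN opNormC (𝒜 : Set (Matrix (Fin d) (Fin d) ℝ)) n ^ κ) ^ (κ * n)⁻¹ := fun n => by
    rw [← Real.rpow_mul (supN_opNormC_nonneg n), mul_inv, ← mul_assoc,
      mul_inv_cancel₀ hκ.ne', one_mul]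
  refine limsup_eq_of_le_mul_of_le_mul hc (fun n => Real.rpow_nonneg (supN_opNormC_nonneg n) _)
    (fun n => Real.rpow_nonneg (nuProd_nonneg hν₀ n) _)
    (isBoundedUnder_supN_opNormC_rpow 𝒜.finite_toSet) (fun n => ?_) (fun n => ?_)
  · rw [Pi.mul_apply, hexp, ← Real.mul_rpow hK.le (nuProd_nonneg hν₀ n)]
    exact Real.rpow_le_rpow (Real.rpow_nonneg (supN_opNormC_nonneg n) κ)
      (supN_rpow_le_mul_nuProd 𝒜.finite_toSet hm hM.le hν hκ n) (by positivity)
  · rw [Pi.mul_apply, hexp, ← Real.mul_rpow hK.le (Real.rpow_nonneg (supN_opNormC_nonneg n) κ)]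
    exact Real.rpow_le_rpow (nuProd_nonneg hν₀ n)
      (nuProd_le_mul_supN_rpow 𝒜.finite_toSet hm hM.le hν hκ n) (by positivity)

/-- for a continuous function `ν`, strictly positive outside `0` and
positively homogeneous of degree `κ > 0`, one has `ρ(𝒜) = limsup (νₙ(𝒜))^{1/(κn)}`. -/
theorem statement7 {d : ℕ} (𝒜 : Finset (Matrix (Fin d) (Fin d) ℝ)) (h𝒜 : 𝒜.Nonempty)
    (ν : (Fin d → ℝ) → ℝ) (κ : ℝ) (hκ : 0 < κ)
    (hcont : Continuous ν) (hpos : ∀ x, x ≠ 0 → 0 < ν x)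
    (hhom : ∀ (t : ℝ), 0 < t → ∀ x, ν (t • x) = t ^ κ * ν x) :
    jsr opNormC (↑𝒜 : Set (Matrix (Fin d) (Fin d) ℝ)) =
      Filter.limsup
        (fun n : ℕ => (nuProd ν (↑𝒜 : Set (Matrix (Fin d) (Fin d) ℝ)) n) ^ ((κ * n)⁻¹))
        Filter.atTop :=
  statement7_general 𝒜 ν κ hκ hcont hpos hhom
end

section
/- Let 𝒜 be a finite irreducible set of real d×d matrices and p ≥ d−1. Then for every n ≥ 1, ρ(𝒜) ≤ ‖𝒜ⁿ‖^{1/n} ≤ (η_p(𝒜))^{1/n} ρ(𝒜), where η_p(𝒜) = max{1, ρ(𝒜)^p} / χ_p(𝒜) and χ_p(𝒜) is the p-measure of irreducibility. -/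
open Filter Set

/-- Products of at most `p` factors from `𝒜` (including the empty product `1`). -/
def prodsLe {d : ℕ} (𝒜 : Set (Matrix (Fin d) (Fin d) ℝ)) (p : ℕ) :
    Set (Matrix (Fin d) (Fin d) ℝ) :=
  ⋃ k ∈ Finset.range (p + 1), prods 𝒜 k

/-- A vector norm on `ℝ^d`: nonnegative, definite, absolutely homogeneous, subadditive. -/
def IsNorm {d : ℕ} (ν : (Fin d → ℝ) → ℝ) : Prop :=
  (∀ x, 0 ≤ ν x) ∧ (∀ x, ν x = 0 ↔ x = 0) ∧
  (∀ (a : ℝ) x, ν (a • x) = |a| * ν x) ∧ (∀ x y, ν (x + y) ≤ ν x + ν y)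

/-- Operator norm of a matrix induced by the vector norm `ν` on `ℝ^d`. -/
noncomputable def opNorm {d : ℕ} (ν : (Fin d → ℝ) → ℝ)
    (A : Matrix (Fin d) (Fin d) ℝ) : ℝ :=
  sSup ((fun x => ν (A.mulVec x)) '' {x | ν x = 1})

/-- `‖𝒜ⁿ‖` computed with the operator norm induced by `ν`. -/
noncomputable def supNu {d : ℕ} (ν : (Fin d → ℝ) → ℝ)
    (𝒜 : Set (Matrix (Fin d) (Fin d) ℝ)) (n : ℕ) : ℝ :=
  supN (opNorm ν) 𝒜 n

/-- The joint spectral radius computed with the operator norm induced by `ν`. -/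
noncomputable def jsrNu {d : ℕ} (ν : (Fin d → ℝ) → ℝ)
    (𝒜 : Set (Matrix (Fin d) (Fin d) ℝ)) : ℝ :=
  jsr (opNorm ν) 𝒜

/-- The `p`-measure of irreducibility (quasi-controllability) of `𝒜`
with respect to the vector norm `ν`:
`χ_p(𝒜) = inf_{ν x = 1} sup { t : S(t) ⊆ conv(𝒜_p(x) ∪ 𝒜_p(−x)) }`. -/
noncomputable def chi {d : ℕ} (ν : (Fin d → ℝ) → ℝ)
    (𝒜 : Set (Matrix (Fin d) (Fin d) ℝ)) (p : ℕ) : ℝ :=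
  sInf ((fun x => sSup {t : ℝ | 0 ≤ t ∧
      {y | ν y ≤ t} ⊆ convexHull ℝ
        (((fun A => A.mulVec x) '' prodsLe 𝒜 p) ∪
         ((fun A => A.mulVec (-x)) '' prodsLe 𝒜 p))}) '' {x | ν x = 1})

/-- `𝒜` is irreducible: the only common invariant subspaces are `⊥` and `⊤`. -/
def MatSetIrreducible {d : ℕ} (𝒜 : Set (Matrix (Fin d) (Fin d) ℝ)) : Prop :=
  ∀ L : Submodule ℝ (Fin d → ℝ), (∀ A ∈ 𝒜, ∀ x ∈ L, A.mulVec x ∈ L) → L = ⊥ ∨ L = ⊤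

/-!
The lower bound `ρ(𝒜) ≤ ‖𝒜ⁿ‖^{1/n}` is Fekete's lemma for the submultiplicative sequence
`m ↦ ‖𝒜ᵐ‖`.

For the upper bound, irreducibility and `p ≥ d - 1` make the orbit `𝒜_p x` span `ℝ^d` for every
`x ≠ 0`, and a compactness argument over pairs (unit vector, unit functional) combined with
Hahn–Banach shows that `χ_p(𝒜) > 0`. Since `y ↦ ν (Π y)` is convex, the inclusion of the ball of
radius `χ_p` in `conv(𝒜_p(x) ∪ 𝒜_p(-x))` gives, for every `x`, a product `R` of length between
`n` and `n + p` with `ν (R x) ≥ χ_p ‖𝒜ⁿ‖ ν x`. Iterating `j` times yields products of length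
`m ∈ [n j, (n + p) j]` with `‖𝒜ᵐ‖ ≥ (χ_p ‖𝒜ⁿ‖)ʲ`, so that
`χ_p ‖𝒜ⁿ‖ ≤ max (ρⁿ) (ρⁿ⁺ᵖ) = max 1 ρᵖ · ρⁿ`.
-/

open scoped Pointwise Matrix
open Topology

theorem Set.Finite.pow {M : Type*} [Monoid M] {S : Set M} (hS : S.Finite) (n : ℕ) :
    (S ^ n).Finite := by
  induction n with
  | zero => simp
  | succ n ih => rw [pow_succ]; exact ih.mul hS

theorem Set.pow_subset_iUnion_pow {M : Type*} [Monoid M] {S Q : Set M} {a b : ℕ}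
    (h : Q ⊆ ⋃ m ∈ Finset.Icc a b, S ^ m) (j : ℕ) :
    Q ^ j ⊆ ⋃ m ∈ Finset.Icc (a * j) (b * j), S ^ m := by
  induction j with
  | zero => simp
  | succ j ih =>
    rw [pow_succ]
    rintro _ ⟨P, hP, R, hR, rfl⟩
    obtain ⟨m, hm, hP⟩ := Set.mem_iUnion₂.1 (ih hP)
    obtain ⟨m', hm', hR⟩ := Set.mem_iUnion₂.1 (h hR)
    rw [Finset.mem_Icc] at hm hm'
    refine Set.mem_iUnion₂.2 ⟨m + m', Finset.mem_Icc.2 ⟨by nlinarith, by nlinarith⟩, ?_⟩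
    rw [pow_add]
    exact Set.mul_mem_mul hP hR

theorem Submodule.eq_top_of_monotone_of_stable {K V : Type*} [DivisionRing K] [AddCommGroup V]
    [Module K V] [FiniteDimensional K V] {L : ℕ → Submodule K V} (hmono : Monotone L)
    (hstable : ∀ k, L (k + 1) ≤ L k → L k = ⊤) (h0 : L 0 ≠ ⊥) {p : ℕ}
    (hp : Module.finrank K V ≤ p + 1) : L p = ⊤ := by
  have key : ∀ k, L k = ⊤ ∨ k + 1 ≤ Module.finrank K (L k) := by
    intro k
    induction k with
    | zero => exact .inr (Nat.pos_of_ne_zero (Submodule.finrank_eq_zero.not.2 h0))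
    | succ k ih =>
      rcases ih with htop | hrank
      · exact .inl (top_unique (htop ▸ hmono k.le_succ))
      by_cases hle : L (k + 1) ≤ L k
      · exact .inl (top_unique (hstable k hle ▸ hmono k.le_succ))
      · have : Module.finrank K (L k) < Module.finrank K (L (k + 1)) :=
          Submodule.finrank_lt_finrank_of_lt ((hmono k.le_succ).lt_of_not_ge hle)
        exact .inr (by omega)
  rcases key p with htop | hrank
  · exact htop
  · exact Submodule.eq_top_of_finrank_eq (le_antisymm (Submodule.finrank_le _) (by omega))

theorem sSup_mul_sSup_le_of_nonneg {s t : Set ℝ} {M : ℝ} (hs : ∀ a ∈ s, 0 ≤ a)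
    (ht : ∀ b ∈ t, 0 ≤ b) (hM : 0 ≤ M) (h : ∀ a ∈ s, ∀ b ∈ t, a * b ≤ M) :
    sSup s * sSup t ≤ M := by
  rw [mul_comm, ← smul_eq_mul, ← Real.sSup_smul_of_nonneg (Real.sSup_nonneg ht)]
  refine Real.sSup_le ?_ hM
  rintro _ ⟨a, ha, rfl⟩
  show sSup t * a ≤ M
  rw [mul_comm, ← smul_eq_mul, ← Real.sSup_smul_of_nonneg (hs a ha)]
  exact Real.sSup_le (by rintro _ ⟨b, hb, rfl⟩; exact h a ha b hb) hM

section Submultiplicative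

variable {u : ℕ → ℝ}

theorem eventually_lt_pow_of_submultiplicative (h0 : ∀ m, 0 ≤ u m)
    (hmul : ∀ m k, u (m + k) ≤ u m * u k) {n : ℕ} (hn : n ≠ 0) {a : ℝ} (ha : 0 < a)
    (hlt : u n < a ^ n) : ∀ᶠ m in atTop, u m < a ^ m := by
  have hpow : ∀ k r, u (n * k + r) ≤ u n ^ k * u r := by
    intro k r
    induction k with
    | zero => simp
    | succ k ih =>
      calc u (n * (k + 1) + r) = u (n + (n * k + r)) := by ring_nf
        _ ≤ u n * u (n * k + r) := hmul _ _
        _ ≤ u n * (u n ^ k * u r) := by gcongr; exact h0 n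
        _ = u n ^ (k + 1) * u r := by ring
  have han : 0 < a ^ n := pow_pos ha n
  refine Eventually.atTop_of_arithmetic hn fun r _ => ?_
  -- `u (n k + r) ≤ (u n / aⁿ)ᵏ u r · aⁿᵏ`, and the ratio `u n / aⁿ` lies in `[0, 1)`.
  have hq : Tendsto (fun k => (u n / a ^ n) ^ k * u r) atTop (𝓝 0) := by
    simpa using (tendsto_pow_atTop_nhds_zero_of_lt_one (div_nonneg (h0 n) han.le)
      ((div_lt_one han).2 hlt)).mul_const (u r)
  filter_upwards [hq.eventually (gt_mem_nhds (pow_pos ha r))] with k hk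
  calc u (n * k + r) ≤ u n ^ k * u r := hpow k r
    _ = (u n / a ^ n) ^ k * u r * (a ^ n) ^ k := by
      rw [div_pow, div_mul_eq_mul_div, div_mul_cancel₀ _ (pow_ne_zero k han.ne')]
    _ < a ^ r * (a ^ n) ^ k := by gcongr
    _ = a ^ (n * k + r) := by ring

theorem eventually_rpow_inv_lt_of_submultiplicative (h0 : ∀ m, 0 ≤ u m)
    (hmul : ∀ m k, u (m + k) ≤ u m * u k) {n : ℕ} (hn : n ≠ 0) {a : ℝ}
    (hlt : u n ^ (n : ℝ)⁻¹ < a) : ∀ᶠ m : ℕ in atTop, u m ^ (m : ℝ)⁻¹ < a := by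
  have ha : 0 < a := (Real.rpow_nonneg (h0 n) _).trans_lt hlt
  have hn' : (0 : ℝ) < n := by positivity
  rw [Real.rpow_inv_lt_iff_of_pos (h0 n) ha.le hn', Real.rpow_natCast] at hlt
  filter_upwards [eventually_lt_pow_of_submultiplicative h0 hmul hn ha hlt,
    eventually_gt_atTop 0] with m hm hm0
  rwa [Real.rpow_inv_lt_iff_of_pos (h0 m) ha.le (by positivity), Real.rpow_natCast]

theorem isBoundedUnder_rpow_inv_of_submultiplicative (h0 : ∀ m, 0 ≤ u m)
    (hmul : ∀ m k, u (m + k) ≤ u m * u k) :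
    IsBoundedUnder (· ≤ ·) atTop fun m : ℕ => u m ^ (m : ℝ)⁻¹ :=
  isBoundedUnder_of_eventually_le ((eventually_rpow_inv_lt_of_submultiplicative h0 hmul
    one_ne_zero (lt_add_one _)).mono fun _ => le_of_lt)

theorem limsup_rpow_inv_le_of_submultiplicative (h0 : ∀ m, 0 ≤ u m)
    (hmul : ∀ m k, u (m + k) ≤ u m * u k) {n : ℕ} (hn : n ≠ 0) :
    limsup (fun m : ℕ => u m ^ (m : ℝ)⁻¹) atTop ≤ u n ^ (n : ℝ)⁻¹ :=
  le_of_forall_gt_imp_ge_of_dense fun _ ha =>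
    limsup_le_of_le (isCoboundedUnder_le_of_le atTop fun m => Real.rpow_nonneg (h0 m) _)
      ((eventually_rpow_inv_lt_of_submultiplicative h0 hmul hn ha).mono fun _ => le_of_lt)

theorem le_pow_limsup_rpow_inv (hbdd : IsBoundedUnder (· ≤ ·) atTop fun m : ℕ => u m ^ (m : ℝ)⁻¹)
    {c : ℝ} (hc : 0 ≤ c) {k : ℕ} (hk : k ≠ 0)
    (h : ∃ᶠ m : ℕ in atTop, c ^ ((m : ℝ) / k) ≤ u m) :
    c ≤ limsup (fun m : ℕ => u m ^ (m : ℝ)⁻¹) atTop ^ k := by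
  have hroot : c ^ (k : ℝ)⁻¹ ≤ limsup (fun m : ℕ => u m ^ (m : ℝ)⁻¹) atTop := by
    refine le_limsup_of_frequently_le ?_ hbdd
    refine (h.and_eventually (eventually_gt_atTop 0)).mono fun m ⟨hm, hm0⟩ => ?_
    calc c ^ (k : ℝ)⁻¹ = (c ^ ((m : ℝ) / k)) ^ (m : ℝ)⁻¹ := by
          rw [← Real.rpow_mul hc]
          field_simp
      _ ≤ u m ^ (m : ℝ)⁻¹ := by gcongr
  calc c = (c ^ (k : ℝ)⁻¹) ^ k := (Real.rpow_inv_natCast_pow hc hk).symm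
    _ ≤ _ := by gcongr

theorem le_max_pow_limsup_rpow_inv
    (hbdd : IsBoundedUnder (· ≤ ·) atTop fun m : ℕ => u m ^ (m : ℝ)⁻¹)
    {c : ℝ} (hc : 0 < c) {a b : ℕ} (ha : a ≠ 0) (hab : a ≤ b)
    (h : ∀ j, ∃ m, a * j ≤ m ∧ m ≤ b * j ∧ c ^ j ≤ u m) :
    c ≤ max (limsup (fun m : ℕ => u m ^ (m : ℝ)⁻¹) atTop ^ a)
      (limsup (fun m : ℕ => u m ^ (m : ℝ)⁻¹) atTop ^ b) := by
  have hb : b ≠ 0 := by omega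
  rcases le_total c 1 with hc1 | hc1
  · refine le_max_of_le_left <|
      le_pow_limsup_rpow_inv hbdd hc.le ha (frequently_atTop.2 fun j => ?_)
    obtain ⟨m, hjm, -, hm⟩ := h j
    refine ⟨m, by nlinarith [Nat.pos_of_ne_zero ha], le_trans ?_ hm⟩
    rw [← Real.rpow_natCast]
    refine Real.rpow_le_rpow_of_exponent_ge hc hc1 ?_
    rw [le_div_iff₀ (by positivity)]
    exact_mod_cast (mul_comm a j) ▸ hjm
  · refine le_max_of_le_right <|
      le_pow_limsup_rpow_inv hbdd hc.le hb (frequently_atTop.2 fun j => ?_)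
    obtain ⟨m, hjm, hmj, hm⟩ := h j
    refine ⟨m, by nlinarith [Nat.pos_of_ne_zero ha], le_trans ?_ hm⟩
    rw [← Real.rpow_natCast]
    refine Real.rpow_le_rpow_of_exponent_le hc1 ?_
    rw [div_le_iff₀ (by positivity)]
    exact_mod_cast (mul_comm b j) ▸ hmj

end Submultiplicative

namespace IsNorm

variable {d : ℕ} {ν : (Fin d → ℝ) → ℝ} (hν : IsNorm ν)
include hν

theorem nonneg (x : Fin d → ℝ) : 0 ≤ ν x := hν.1 x

theorem map_zero : ν 0 = 0 := (hν.2.1 0).2 rfl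

theorem map_smul (a : ℝ) (x : Fin d → ℝ) : ν (a • x) = |a| * ν x := hν.2.2.1 a x

theorem map_neg (x : Fin d → ℝ) : ν (-x) = ν x := by
  simpa using hν.map_smul (-1) x

theorem pos {x : Fin d → ℝ} (hx : x ≠ 0) : 0 < ν x :=
  (hν.nonneg x).lt_of_ne fun h => hx ((hν.2.1 x).1 h.symm)

theorem map_smul_of_nonneg {a : ℝ} (ha : 0 ≤ a) (x : Fin d → ℝ) : ν (a • x) = a * ν x := by
  rw [hν.map_smul, abs_of_nonneg ha]

theorem convexOn_comp_mulVec (A : Matrix (Fin d) (Fin d) ℝ) :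
    ConvexOn ℝ Set.univ fun x => ν (A *ᵥ x) := by
  refine ⟨convex_univ, fun x _ y _ a b ha hb _ => ?_⟩
  simp only [Matrix.mulVec_add, Matrix.mulVec_smul, smul_eq_mul]
  calc ν (a • A *ᵥ x + b • A *ᵥ y) ≤ ν (a • A *ᵥ x) + ν (b • A *ᵥ y) := hν.2.2.2 _ _
    _ = a * ν (A *ᵥ x) + b * ν (A *ᵥ y) := by
      rw [hν.map_smul_of_nonneg ha, hν.map_smul_of_nonneg hb]

theorem continuous : Continuous ν := by
  simpa using (hν.convexOn_comp_mulVec 1).locallyLipschitz.continuous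

theorem exists_pos_mul_norm_le : ∃ a > 0, ∀ x, a * ‖x‖ ≤ ν x := by
  obtain ⟨a, ha, hle⟩ := (isCompact_sphere (0 : Fin d → ℝ) 1).exists_forall_le'
    hν.continuous.continuousOn fun x hx => hν.pos (ne_zero_of_mem_unit_sphere ⟨x, hx⟩)
  refine ⟨a, ha, fun x => ?_⟩
  rcases eq_or_ne x 0 with rfl | hx
  · simp [hν.map_zero]
  have hnx : 0 < ‖x‖ := norm_pos_iff.2 hx
  have hu : ‖x‖⁻¹ • x ∈ Metric.sphere (0 : Fin d → ℝ) 1 := by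
    simp [norm_smul, hnx.ne']
  have := hle _ hu
  rw [hν.map_smul_of_nonneg (inv_nonneg.2 hnx.le)] at this
  rwa [le_inv_mul_iff₀ hnx, mul_comm] at this

theorem isCompact_sphere : IsCompact {x : Fin d → ℝ | ν x = 1} := by
  obtain ⟨a, ha, hle⟩ := hν.exists_pos_mul_norm_le
  refine Metric.isCompact_of_isClosed_isBounded (isClosed_eq hν.continuous continuous_const)
    ((Metric.isBounded_closedBall (x := 0) (r := a⁻¹)).subset fun x (hx : ν x = 1) => ?_)
  rw [mem_closedBall_zero_iff, ← one_div, le_div_iff₀ ha, mul_comm]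
  exact hx ▸ hle x

end IsNorm

section Products

variable {d : ℕ}

theorem prods_eq_pow (S : Set (Matrix (Fin d) (Fin d) ℝ)) (n : ℕ) : prods S n = S ^ n := by
  induction n with
  | zero =>
    ext P
    simp [prods, List.length_eq_zero_iff, eq_comm]
  | succ n ih =>
    ext P
    rw [pow_succ', Set.mem_mul, ← ih]
    constructor
    · rintro ⟨_ | ⟨A, l⟩, hl, hS, rfl⟩
      · simp at hl
      · exact ⟨A, hS A (by simp), l.prod, ⟨l, by simpa using hl, fun B hB => hS B (by simp [hB]),
          rfl⟩, rfl⟩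
    · rintro ⟨A, hA, _, ⟨l, rfl, hS, rfl⟩, rfl⟩
      exact ⟨A :: l, rfl, by simpa [hA] using hS, rfl⟩

theorem prodsLe_eq (S : Set (Matrix (Fin d) (Fin d) ℝ)) (p : ℕ) :
    prodsLe S p = ⋃ k ∈ Finset.range (p + 1), S ^ k := by
  simp only [prodsLe, prods_eq_pow]

theorem prodsLe_finite {S : Set (Matrix (Fin d) (Fin d) ℝ)} (hS : S.Finite) (p : ℕ) :
    (prodsLe S p).Finite := by
  rw [prodsLe_eq]
  exact (Finset.range (p + 1)).finite_toSet.biUnion fun k _ => hS.pow k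

theorem one_mem_prodsLe (S : Set (Matrix (Fin d) (Fin d) ℝ)) (p : ℕ) : 1 ∈ prodsLe S p := by
  rw [prodsLe_eq]
  exact Set.mem_biUnion (Finset.mem_range.2 p.succ_pos) (Set.one_mem_one)

theorem prodsLe_mono (S : Set (Matrix (Fin d) (Fin d) ℝ)) {p q : ℕ} (h : p ≤ q) :
    prodsLe S p ⊆ prodsLe S q :=
  Set.biUnion_subset_biUnion_left fun k hk =>
    Finset.mem_range.2 ((Finset.mem_range.1 hk).trans_le (by omega))

theorem mul_prodsLe_subset (S : Set (Matrix (Fin d) (Fin d) ℝ)) (p : ℕ) :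
    S * prodsLe S p ⊆ prodsLe S (p + 1) := by
  rintro _ ⟨A, hA, B, hB, rfl⟩
  simp only [prodsLe_eq, Set.mem_iUnion, Finset.mem_range] at hB ⊢
  obtain ⟨k, hk, hB⟩ := hB
  exact ⟨k + 1, by omega, by rw [pow_succ']; exact Set.mul_mem_mul hA hB⟩

theorem pow_mul_prodsLe_subset (S : Set (Matrix (Fin d) (Fin d) ℝ)) (n p : ℕ) :
    S ^ n * prodsLe S p ⊆ ⋃ m ∈ Finset.Icc n (n + p), S ^ m := by
  rintro _ ⟨P, hP, B, hB, rfl⟩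
  simp only [prodsLe_eq, Set.mem_iUnion, Finset.mem_range, Finset.mem_Icc] at hB ⊢
  obtain ⟨k, hk, hB⟩ := hB
  exact ⟨n + k, by omega, by rw [pow_add]; exact Set.mul_mem_mul hP hB⟩

theorem span_mulVec_prodsLe_eq_top {𝒜 : Set (Matrix (Fin d) (Fin d) ℝ)}
    (hirr : MatSetIrreducible 𝒜) {p : ℕ} (hp : d - 1 ≤ p) {x : Fin d → ℝ} (hx : x ≠ 0) :
    Submodule.span ℝ ((· *ᵥ x) '' prodsLe 𝒜 p) = ⊤ := by
  set L : ℕ → Submodule ℝ (Fin d → ℝ) := fun k => Submodule.span ℝ ((· *ᵥ x) '' prodsLe 𝒜 k)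
  have hxL : ∀ k, x ∈ L k := fun k =>
    Submodule.subset_span ⟨1, one_mem_prodsLe 𝒜 k, Matrix.one_mulVec x⟩
  have hmono : Monotone L := monotone_nat_of_le_succ fun k =>
    Submodule.span_mono (Set.image_mono (prodsLe_mono 𝒜 k.le_succ))
  refine Submodule.eq_top_of_monotone_of_stable hmono (fun k hk => ?_)
    (fun h => hx (by simpa [h] using hxL 0)) (by rw [Module.finrank_fin_fun]; omega)
  refine (hirr (L k) fun A hA z hz => ?_).resolve_left fun h => hx (by simpa [h] using hxL k)
  -- `A` maps `L k` into `L (k + 1)`, which is contained in `L k`.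
  refine hk ?_
  have : Submodule.map (Matrix.mulVecLin A) (L k) ≤ L (k + 1) := by
    rw [Submodule.map_span, Submodule.span_le]
    rintro _ ⟨_, ⟨B, hB, rfl⟩, rfl⟩
    exact Submodule.subset_span ⟨A * B, mul_prodsLe_subset 𝒜 k (Set.mul_mem_mul hA hB),
      (Matrix.mulVec_mulVec _ _ _).symm⟩
  exact this ⟨z, hz, rfl⟩

end Products

variable {d : ℕ} {ν : (Fin d → ℝ) → ℝ}

section OpNorm

theorem opNorm_le {A : Matrix (Fin d) (Fin d) ℝ} {C : ℝ} (hC : 0 ≤ C)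
    (h : ∀ x, ν x = 1 → ν (A *ᵥ x) ≤ C) : opNorm ν A ≤ C :=
  Real.sSup_le (by rintro _ ⟨x, hx, rfl⟩; exact h x hx) hC

variable (hν : IsNorm ν)
include hν

theorem opNorm_nonneg (A : Matrix (Fin d) (Fin d) ℝ) : 0 ≤ opNorm ν A :=
  Real.sSup_nonneg (by rintro _ ⟨x, -, rfl⟩; exact hν.nonneg _)

theorem le_opNorm (A : Matrix (Fin d) (Fin d) ℝ) {x : Fin d → ℝ} (hx : ν x = 1) :
    ν (A *ᵥ x) ≤ opNorm ν A :=
  le_csSup ((hν.isCompact_sphere.image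
    (hν.continuous.comp (Matrix.mulVecLin A).continuous_of_finiteDimensional)).bddAbove)
    ⟨x, hx, rfl⟩

theorem nu_mulVec_le (A : Matrix (Fin d) (Fin d) ℝ) (x : Fin d → ℝ) :
    ν (A *ᵥ x) ≤ opNorm ν A * ν x := by
  rcases eq_or_ne x 0 with rfl | hx
  · simp [hν.map_zero]
  have hpos := hν.pos hx
  have h := le_opNorm hν A (x := (ν x)⁻¹ • x)
    (by rw [hν.map_smul_of_nonneg (inv_nonneg.2 hpos.le), inv_mul_cancel₀ hpos.ne'])
  rwa [Matrix.mulVec_smul, hν.map_smul_of_nonneg (inv_nonneg.2 hpos.le), inv_mul_le_iff₀ hpos,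
    mul_comm] at h

theorem opNorm_mul_le (A B : Matrix (Fin d) (Fin d) ℝ) :
    opNorm ν (A * B) ≤ opNorm ν A * opNorm ν B := by
  refine opNorm_le (mul_nonneg (opNorm_nonneg hν A) (opNorm_nonneg hν B)) fun x hx => ?_
  calc ν ((A * B) *ᵥ x) = ν (A *ᵥ B *ᵥ x) := by rw [Matrix.mulVec_mulVec]
    _ ≤ opNorm ν A * ν (B *ᵥ x) := nu_mulVec_le hν A _
    _ ≤ opNorm ν A * opNorm ν B := by
      gcongr
      · exact opNorm_nonneg hν A
      · exact le_opNorm hν B hx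

end OpNorm

section SupNu

variable {𝒜 : Set (Matrix (Fin d) (Fin d) ℝ)}

theorem supNu_eq (n : ℕ) : supNu ν 𝒜 n = sSup (opNorm ν '' 𝒜 ^ n) := by
  rw [supNu, supN, prods_eq_pow]

theorem le_supNu (h𝒜 : 𝒜.Finite) {n : ℕ} {P : Matrix (Fin d) (Fin d) ℝ} (hP : P ∈ 𝒜 ^ n) :
    opNorm ν P ≤ supNu ν 𝒜 n := by
  rw [supNu_eq]
  exact le_csSup (((h𝒜.pow n).image _).bddAbove) ⟨P, hP, rfl⟩

theorem supNu_le {n : ℕ} {C : ℝ} (hC : 0 ≤ C) (h : ∀ P ∈ 𝒜 ^ n, opNorm ν P ≤ C) :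
    supNu ν 𝒜 n ≤ C := by
  rw [supNu_eq]
  exact Real.sSup_le (by rintro _ ⟨P, hP, rfl⟩; exact h P hP) hC

theorem nonempty_of_supNu_pos {n : ℕ} (h : 0 < supNu ν 𝒜 n) :
    (𝒜 ^ n).Nonempty ∧ {x | ν x = 1}.Nonempty := by
  by_contra hempty
  exact h.not_ge (supNu_le le_rfl fun P hP =>
    opNorm_le le_rfl fun x hx => (hempty ⟨⟨P, hP⟩, x, hx⟩).elim)

variable (hν : IsNorm ν)
include hν

theorem supNu_nonneg (n : ℕ) : 0 ≤ supNu ν 𝒜 n :=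
  Real.sSup_nonneg (by rintro _ ⟨P, -, rfl⟩; exact opNorm_nonneg hν P)

theorem supNu_add_le (h𝒜 : 𝒜.Finite) (m n : ℕ) :
    supNu ν 𝒜 (m + n) ≤ supNu ν 𝒜 m * supNu ν 𝒜 n := by
  refine supNu_le (mul_nonneg (supNu_nonneg hν m) (supNu_nonneg hν n)) ?_
  rw [pow_add]
  rintro _ ⟨P, hP, Q, hQ, rfl⟩
  calc opNorm ν (P * Q) ≤ opNorm ν P * opNorm ν Q := opNorm_mul_le hν P Q
    _ ≤ supNu ν 𝒜 m * supNu ν 𝒜 n := by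
      gcongr
      · exact opNorm_nonneg hν Q
      · exact supNu_nonneg hν m
      · exact le_supNu h𝒜 hP
      · exact le_supNu h𝒜 hQ

variable (h𝒜 : 𝒜.Finite)
include h𝒜

theorem isBoundedUnder_supNu_rpow_inv :
    IsBoundedUnder (· ≤ ·) atTop fun m : ℕ => supNu ν 𝒜 m ^ (m : ℝ)⁻¹ :=
  isBoundedUnder_rpow_inv_of_submultiplicative (supNu_nonneg hν) (supNu_add_le hν h𝒜)

theorem jsrNu_le_rpow {n : ℕ} (hn : n ≠ 0) : jsrNu ν 𝒜 ≤ supNu ν 𝒜 n ^ (n : ℝ)⁻¹ :=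
  limsup_rpow_inv_le_of_submultiplicative (supNu_nonneg hν) (supNu_add_le hν h𝒜) hn

theorem jsrNu_nonneg : 0 ≤ jsrNu ν 𝒜 :=
  le_limsup_of_frequently_le (Frequently.of_forall fun m => Real.rpow_nonneg (supNu_nonneg hν m) _)
    (isBoundedUnder_supNu_rpow_inv hν h𝒜)

end SupNu

theorem exists_pow_mul_le_of_forall_exists {𝒬 : Set (Matrix (Fin d) (Fin d) ℝ)} {c : ℝ}
    (hc : 0 ≤ c) (h : ∀ x, ∃ R ∈ 𝒬, c * ν x ≤ ν (R *ᵥ x)) (j : ℕ) (x : Fin d → ℝ) :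
    ∃ P ∈ 𝒬 ^ j, c ^ j * ν x ≤ ν (P *ᵥ x) := by
  induction j generalizing x with
  | zero => exact ⟨1, Set.one_mem_one, by simp⟩
  | succ j ih =>
    obtain ⟨R, hR, hRx⟩ := h x
    obtain ⟨P, hP, hPx⟩ := ih (R *ᵥ x)
    refine ⟨P * R, by rw [pow_succ]; exact Set.mul_mem_mul hP hR, ?_⟩
    rw [← Matrix.mulVec_mulVec]
    calc c ^ (j + 1) * ν x = c ^ j * (c * ν x) := by ring
      _ ≤ c ^ j * ν (R *ᵥ x) := by gcongr
      _ ≤ ν (P *ᵥ R *ᵥ x) := hPx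

section Ball

def symmOrbit (𝒮 : Set (Matrix (Fin d) (Fin d) ℝ)) (x : Fin d → ℝ) : Set (Fin d → ℝ) :=
  (fun A => A *ᵥ x) '' 𝒮 ∪ (fun A => A *ᵥ (-x)) '' 𝒮

theorem symmOrbit_finite {𝒮 : Set (Matrix (Fin d) (Fin d) ℝ)} (h𝒮 : 𝒮.Finite) (x : Fin d → ℝ) :
    (symmOrbit 𝒮 x).Finite :=
  (h𝒮.image _).union (h𝒮.image _)

variable (hν : IsNorm ν) {𝒮 : Set (Matrix (Fin d) (Fin d) ℝ)} (h𝒮 : 𝒮.Finite)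
  (hspan : ∀ x ≠ 0, Submodule.span ℝ ((· *ᵥ x) '' 𝒮) = ⊤)
include hν h𝒮 hspan

theorem exists_pos_mul_norm_le_sum_abs :
    ∃ κ > 0, ∀ x, ν x = 1 → ∀ f : StrongDual ℝ (Fin d → ℝ),
      κ * ‖f‖ ≤ ∑ B ∈ h𝒮.toFinset, |f (B *ᵥ x)| := by
  let g : (Fin d → ℝ) × StrongDual ℝ (Fin d → ℝ) → ℝ := fun z =>
    ∑ B ∈ h𝒮.toFinset, |z.2 (B *ᵥ z.1)|
  have hg : Continuous g := continuous_finsetSum _ fun B _ =>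
    (continuous_snd.clm_apply
      ((Matrix.mulVecLin B).continuous_of_finiteDimensional.comp continuous_fst)).abs
  have hK := hν.isCompact_sphere.prod (isCompact_sphere (0 : StrongDual ℝ (Fin d → ℝ)) 1)
  obtain ⟨κ, hκ, hle⟩ := hK.exists_forall_le' hg.continuousOn (a := 0) <| by
    rintro ⟨x, f⟩ ⟨hx, hf⟩
    refine (Finset.sum_nonneg fun _ _ => abs_nonneg _).lt_of_ne fun h => ?_
    -- otherwise `f` vanishes on the span of `𝒮(x)`, which is everything
    have hker : Submodule.span ℝ ((· *ᵥ x) '' 𝒮) ≤ LinearMap.ker (f : _ →ₗ[ℝ] ℝ) := by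
      rw [Submodule.span_le]
      rintro _ ⟨B, hB, rfl⟩
      exact abs_eq_zero.1 ((Finset.sum_eq_zero_iff_of_nonneg fun _ _ => abs_nonneg _).1 h.symm B
        (h𝒮.mem_toFinset.2 hB))
    rw [hspan x fun h0 => by simp [h0, hν.map_zero] at hx, top_le_iff, LinearMap.ker_eq_top] at hker
    have hf0 : f = 0 := by ext v; exact LinearMap.congr_fun hker v
    simp [hf0] at hf
  refine ⟨κ, hκ, fun x hx f => ?_⟩
  rcases eq_or_ne f 0 with rfl | hf
  · simp
  have hnf : 0 < ‖f‖ := norm_pos_iff.2 hf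
  have := hle (x, ‖f‖⁻¹ • f) ⟨hx, by simp [norm_smul, hnf.ne']⟩
  simp only [g, smul_apply, smul_eq_mul, abs_mul, abs_inv, abs_norm,
    ← Finset.mul_sum] at this
  rwa [le_inv_mul_iff₀ hnf, mul_comm] at this

theorem exists_ball_subset_convexHull_symmOrbit :
    ∃ c > 0, ∀ x, ν x = 1 → {y | ν y ≤ c} ⊆ convexHull ℝ (symmOrbit 𝒮 x) := by
  obtain ⟨κ, hκ, hκle⟩ := exists_pos_mul_norm_le_sum_abs hν h𝒮 hspan
  obtain ⟨a, ha, hale⟩ := hν.exists_pos_mul_norm_le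
  set N : ℕ := h𝒮.toFinset.card
  refine ⟨κ * a / (N + 1), by positivity, fun x hx y hy => ?_⟩
  have hx0 : x ≠ 0 := fun h => by simp [h, hν.map_zero] at hx
  obtain ⟨B₀, hB₀⟩ : 𝒮.Nonempty := Set.nonempty_iff_ne_empty.2 fun h => hx0 <| by
    have := hspan x hx0 ▸ Submodule.mem_top (x := x)
    simpa [h] using this
  by_contra hyS
  obtain ⟨f, u, hfu, huy⟩ := geometric_hahn_banach_closed_point (convex_convexHull ℝ _)
    ((symmOrbit_finite h𝒮 x).isCompact_convexHull (𝕜 := ℝ)).isClosed hyS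
  have hB : ∀ B ∈ 𝒮, |f (B *ᵥ x)| < u := fun B hB => by
    have h1 := hfu _ (subset_convexHull ℝ _ (Or.inl ⟨B, hB, rfl⟩))
    have h2 := hfu _ (subset_convexHull ℝ _ (Or.inr ⟨B, hB, rfl⟩))
    dsimp only at h1 h2
    rw [Matrix.mulVec_neg, map_neg] at h2
    exact abs_lt.2 ⟨by linarith, h1⟩
  have hu : 0 < u := (abs_nonneg _).trans_lt (hB B₀ hB₀)
  have hsum : ∑ B ∈ h𝒮.toFinset, |f (B *ᵥ x)| ≤ N * u := by
    simpa using Finset.sum_le_card_nsmul _ _ u fun B hB' => (hB B (h𝒮.mem_toFinset.1 hB')).le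
  have hNy : (N + 1) * ‖y‖ ≤ κ := by
    have := (hale y).trans hy
    rw [le_div_iff₀ (by positivity)] at this
    nlinarith
  refine lt_irrefl (κ * ‖f‖) ?_
  calc κ * ‖f‖ ≤ N * u := (hκle x hx f).trans hsum
    _ < (N + 1) * f y := by nlinarith
    _ ≤ (N + 1) * (‖f‖ * ‖y‖) := by gcongr; exact (le_abs_self _).trans (f.le_opNorm y)
    _ ≤ κ * ‖f‖ := by nlinarith [norm_nonneg f]

end Ball

section Chi

variable {𝒜 : Set (Matrix (Fin d) (Fin d) ℝ)} {p : ℕ}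

def radii (ν : (Fin d → ℝ) → ℝ) (𝒜 : Set (Matrix (Fin d) (Fin d) ℝ)) (p : ℕ) (x : Fin d → ℝ) :
    Set ℝ :=
  {t | 0 ≤ t ∧ {y | ν y ≤ t} ⊆ convexHull ℝ (symmOrbit (prodsLe 𝒜 p) x)}

theorem chi_nonneg : 0 ≤ chi ν 𝒜 p :=
  Real.sInf_nonneg (by rintro _ ⟨x, -, rfl⟩; exact Real.sSup_nonneg fun t ht => ht.1)

theorem chi_le_sSup_radii {x : Fin d → ℝ} (hx : ν x = 1) : chi ν 𝒜 p ≤ sSup (radii ν 𝒜 p x) :=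
  csInf_le ⟨0, by rintro _ ⟨x, -, rfl⟩; exact Real.sSup_nonneg fun t ht => ht.1⟩ ⟨x, hx, rfl⟩

variable (hν : IsNorm ν)
include hν

theorem bddAbove_radii (h𝒜 : 𝒜.Finite) (x : Fin d → ℝ) (hx : ν x = 1) :
    BddAbove (radii ν 𝒜 p x) := by
  obtain ⟨R, hR⟩ := ((symmOrbit_finite (prodsLe_finite h𝒜 p) x).isCompact_convexHull
    (𝕜 := ℝ)).bddAbove_image hν.continuous.continuousOn
  refine ⟨R, fun t ⟨ht, hball⟩ => ?_⟩
  have := hR ⟨t • x, hball (by simp [hν.map_smul_of_nonneg ht, hx]), rfl⟩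
  simpa [hν.map_smul_of_nonneg ht, hx] using this

theorem chi_pos (h𝒜 : 𝒜.Finite) (hirr : MatSetIrreducible 𝒜) (hp : d - 1 ≤ p)
    (hunit : {x | ν x = 1}.Nonempty) : 0 < chi ν 𝒜 p := by
  obtain ⟨c, hc, hball⟩ := exists_ball_subset_convexHull_symmOrbit hν (prodsLe_finite h𝒜 p)
    fun x hx => span_mulVec_prodsLe_eq_top hirr hp hx
  refine hc.trans_le (le_csInf (hunit.image _) ?_)
  rintro _ ⟨x, hx, rfl⟩
  exact le_csSup (bddAbove_radii hν h𝒜 x hx) ⟨hc.le, hball x hx⟩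

theorem mul_opNorm_le_of_mem_radii {x : Fin d → ℝ} {t : ℝ} (ht : t ∈ radii ν 𝒜 p x)
    (P : Matrix (Fin d) (Fin d) ℝ) {M : ℝ} (hM : ∀ B ∈ prodsLe 𝒜 p, ν (P *ᵥ B *ᵥ x) ≤ M) :
    t * opNorm ν P ≤ M := by
  obtain ⟨ht0, hball⟩ := ht
  have hhull : convexHull ℝ (symmOrbit (prodsLe 𝒜 p) x) ⊆ {y | ν (P *ᵥ y) ≤ M} := by
    refine convexHull_min ?_ (by simpa using (hν.convexOn_comp_mulVec P).convex_le M)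
    rintro _ (⟨B, hB, rfl⟩ | ⟨B, hB, rfl⟩)
    · exact hM B hB
    · simpa [Matrix.mulVec_neg, hν.map_neg] using hM B hB
  have hM0 : 0 ≤ M := by
    simpa [hν.map_zero] using hhull (hball (show ν 0 ≤ t by rwa [hν.map_zero]))
  rw [opNorm, ← smul_eq_mul, ← Real.sSup_smul_of_nonneg ht0]
  refine Real.sSup_le ?_ hM0
  rintro _ ⟨_, ⟨u, hu, rfl⟩, rfl⟩
  have := hhull (hball (show ν (t • u) ≤ t by
    rw [hν.map_smul_of_nonneg ht0, show ν u = 1 from hu, mul_one]))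
  simpa [Matrix.mulVec_smul, hν.map_smul_of_nonneg ht0] using this

variable (h𝒜 : 𝒜.Finite)
include h𝒜

theorem exists_mul_supNu_le {n : ℕ} (hne : (𝒜 ^ n).Nonempty) (x : Fin d → ℝ) :
    ∃ R ∈ 𝒜 ^ n * prodsLe 𝒜 p, chi ν 𝒜 p * supNu ν 𝒜 n * ν x ≤ ν (R *ᵥ x) := by
  have hQne : (𝒜 ^ n * prodsLe 𝒜 p).Nonempty := hne.mul ⟨1, one_mem_prodsLe 𝒜 p⟩
  have hunit : ∀ x, ν x = 1 → ∃ R ∈ 𝒜 ^ n * prodsLe 𝒜 p, chi ν 𝒜 p * supNu ν 𝒜 n ≤ ν (R *ᵥ x) := by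
    intro x hx
    obtain ⟨R, hR, hmax⟩ := Set.exists_max_image _ (fun R => ν (R *ᵥ x))
      ((h𝒜.pow n).mul (prodsLe_finite h𝒜 p)) hQne
    refine ⟨R, hR, ?_⟩
    calc chi ν 𝒜 p * supNu ν 𝒜 n ≤ sSup (radii ν 𝒜 p x) * supNu ν 𝒜 n :=
          mul_le_mul_of_nonneg_right (chi_le_sSup_radii hx) (supNu_nonneg hν n)
      _ ≤ ν (R *ᵥ x) := by
        rw [supNu_eq]
        refine sSup_mul_sSup_le_of_nonneg (fun t ht => ht.1)
          (by rintro _ ⟨P, -, rfl⟩; exact opNorm_nonneg hν P) (hν.nonneg _) ?_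
        rintro t ht _ ⟨P, hP, rfl⟩
        exact mul_opNorm_le_of_mem_radii hν ht P fun B hB => by
          rw [Matrix.mulVec_mulVec]; exact hmax _ (Set.mul_mem_mul hP hB)
  rcases eq_or_ne x 0 with rfl | hx
  · obtain ⟨R, hR⟩ := hQne
    exact ⟨R, hR, by simp [hν.map_zero]⟩
  have hpos := hν.pos hx
  obtain ⟨R, hR, hRx⟩ := hunit ((ν x)⁻¹ • x)
    (by rw [hν.map_smul_of_nonneg (inv_nonneg.2 hpos.le), inv_mul_cancel₀ hpos.ne'])
  rw [Matrix.mulVec_smul, hν.map_smul_of_nonneg (inv_nonneg.2 hpos.le), le_inv_mul_iff₀ hpos,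
    mul_comm] at hRx
  exact ⟨R, hR, hRx⟩

theorem chi_mul_supNu_le {n : ℕ} (hn : n ≠ 0) :
    chi ν 𝒜 p * supNu ν 𝒜 n ≤ max (jsrNu ν 𝒜 ^ n) (jsrNu ν 𝒜 ^ (n + p)) := by
  rcases (mul_nonneg chi_nonneg (supNu_nonneg hν n)).eq_or_lt with h0 | hc
  · rw [← h0]
    exact le_max_of_le_left (pow_nonneg (jsrNu_nonneg hν h𝒜) n)
  obtain ⟨hne, x₀, hx₀⟩ := nonempty_of_supNu_pos (pos_of_mul_pos_right hc chi_nonneg)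
  refine le_max_pow_limsup_rpow_inv (isBoundedUnder_supNu_rpow_inv hν h𝒜) hc hn
    (Nat.le_add_right n p) fun j => ?_
  obtain ⟨P, hP, hPx⟩ :=
    exists_pow_mul_le_of_forall_exists hc.le (exists_mul_supNu_le hν h𝒜 hne) j x₀
  obtain ⟨m, hm, hPm⟩ := Set.mem_iUnion₂.1
    (Set.pow_subset_iUnion_pow (pow_mul_prodsLe_subset 𝒜 n p) j hP)
  rw [Finset.mem_Icc] at hm
  refine ⟨m, hm.1, hm.2, ?_⟩
  calc (chi ν 𝒜 p * supNu ν 𝒜 n) ^ j = (chi ν 𝒜 p * supNu ν 𝒜 n) ^ j * ν x₀ := by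
        rw [show ν x₀ = 1 from hx₀, mul_one]
    _ ≤ ν (P *ᵥ x₀) := hPx
    _ ≤ opNorm ν P := le_opNorm hν P hx₀
    _ ≤ supNu ν 𝒜 m := le_supNu h𝒜 hPm

end Chi

theorem statement8_general {d : ℕ} (𝒜 : Finset (Matrix (Fin d) (Fin d) ℝ))
    (ν : (Fin d → ℝ) → ℝ) (hν : IsNorm ν)
    (hirr : MatSetIrreducible (↑𝒜 : Set (Matrix (Fin d) (Fin d) ℝ)))
    (p : ℕ) (hp : d - 1 ≤ p) (n : ℕ) (hn : 1 ≤ n) :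
    jsrNu ν (↑𝒜 : Set (Matrix (Fin d) (Fin d) ℝ)) ≤
      (supNu ν (↑𝒜 : Set (Matrix (Fin d) (Fin d) ℝ)) n) ^ ((n : ℝ)⁻¹) ∧
    (supNu ν (↑𝒜 : Set (Matrix (Fin d) (Fin d) ℝ)) n) ^ ((n : ℝ)⁻¹) ≤
      ((max 1 ((jsrNu ν (↑𝒜 : Set (Matrix (Fin d) (Fin d) ℝ))) ^ p) /
          chi ν (↑𝒜 : Set (Matrix (Fin d) (Fin d) ℝ)) p) ^ ((n : ℝ)⁻¹)) *
        jsrNu ν (↑𝒜 : Set (Matrix (Fin d) (Fin d) ℝ)) := by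
  have h𝒜 := 𝒜.finite_toSet
  have hn0 : n ≠ 0 := by omega
  set S := supNu ν (↑𝒜 : Set (Matrix (Fin d) (Fin d) ℝ)) n
  set χ := chi ν (↑𝒜 : Set (Matrix (Fin d) (Fin d) ℝ)) p
  set ρ := jsrNu ν (↑𝒜 : Set (Matrix (Fin d) (Fin d) ℝ))
  have hρ : 0 ≤ ρ := jsrNu_nonneg hν h𝒜
  refine ⟨jsrNu_le_rpow hν h𝒜 hn0, ?_⟩
  have hS : 0 ≤ S := supNu_nonneg hν n
  rcases hS.eq_or_lt with h0 | hpos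
  · rw [← h0, Real.zero_rpow (by positivity)]
    exact mul_nonneg (Real.rpow_nonneg (div_nonneg (by positivity) chi_nonneg) _) hρ
  have hχ : 0 < χ := chi_pos hν h𝒜 hirr hp (nonempty_of_supNu_pos hpos).2
  have hbound : S ≤ max 1 (ρ ^ p) / χ * ρ ^ n := by
    rw [div_mul_eq_mul_div, le_div_iff₀ hχ, max_mul_of_nonneg _ _ (pow_nonneg hρ n), one_mul,
      ← pow_add, add_comm p, mul_comm]
    exact chi_mul_supNu_le hν h𝒜 hn0
  calc S ^ (n : ℝ)⁻¹ ≤ (max 1 (ρ ^ p) / χ * ρ ^ n) ^ (n : ℝ)⁻¹ := by gcongr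
    _ = (max 1 (ρ ^ p) / χ) ^ (n : ℝ)⁻¹ * ρ := by
      rw [Real.mul_rpow (by positivity) (by positivity), Real.pow_rpow_inv_natCast hρ hn0]

/-- main theorem, first part: for irreducible `𝒜` and `p ≥ d − 1`,
`ρ(𝒜) ≤ ‖𝒜ⁿ‖^{1/n} ≤ (η_p(𝒜))^{1/n} ρ(𝒜)` with
`η_p(𝒜) = max{1, ρ(𝒜)^p} / χ_p(𝒜)`. -/
theorem statement8 {d : ℕ} (𝒜 : Finset (Matrix (Fin d) (Fin d) ℝ)) (h𝒜 : 𝒜.Nonempty)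
    (ν : (Fin d → ℝ) → ℝ) (hν : IsNorm ν)
    (hirr : MatSetIrreducible (↑𝒜 : Set (Matrix (Fin d) (Fin d) ℝ)))
    (p : ℕ) (hp : d - 1 ≤ p) (n : ℕ) (hn : 1 ≤ n) :
    jsrNu ν (↑𝒜 : Set (Matrix (Fin d) (Fin d) ℝ)) ≤
      (supNu ν (↑𝒜 : Set (Matrix (Fin d) (Fin d) ℝ)) n) ^ ((n : ℝ)⁻¹) ∧
    (supNu ν (↑𝒜 : Set (Matrix (Fin d) (Fin d) ℝ)) n) ^ ((n : ℝ)⁻¹) ≤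
      ((max 1 ((jsrNu ν (↑𝒜 : Set (Matrix (Fin d) (Fin d) ℝ))) ^ p) /
          chi ν (↑𝒜 : Set (Matrix (Fin d) (Fin d) ℝ)) p) ^ ((n : ℝ)⁻¹)) *
        jsrNu ν (↑𝒜 : Set (Matrix (Fin d) (Fin d) ℝ)) :=
  statement8_general 𝒜 ν hν hirr p hp n hn
end
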